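/- Let (M, 𝒮; e_1, …, e_h) be an (a, q, h, d)-pyramid, M_h = M / {e_1, …, e_h}, and S ∈ 𝒮. Then there is a restriction M' of M with r(M') = a + h such that (M', {S' ∈ 𝒮 : cl_{M_h}(S') = cl_{M_h}(S)}; e_1, …, e_h) is an (a, q, h, d)-pyramid. -/

import Mathlib

open Set
open scoped Classical

namespace Matroid

variable {α β : Type*}

/-- The rank of a set `X` in a matroid `M`: the maximum size of an independent subset of `X`
(appropriate for finite matroids). -/
noncomputable def rk (M : Matroid α) (X : Set α) : ℕ :=
  sSup {n | ∃ I, I ⊆ X ∧ M.Indep I ∧ I.ncard = n}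

/-- The rank `r(M)` of a matroid `M`. -/
noncomputable def rank (M : Matroid α) : ℕ := M.rk M.E

/-- The deletion `M \ D` of a set `D` from `M`. -/
def delete' (M : Matroid α) (D : Set α) : Matroid α := M ↾ (M.E \ D)

/-- The contraction `M / C` of a set `C` in `M`, defined via duality. -/
def contract' (M : Matroid α) (C : Set α) : Matroid α := (M✶.delete' C)✶

/-- `N` is a minor of `M`, i.e. `N = M / C \ D` for some sets `C` and `D`. -/
def IsMinor' (N M : Matroid α) : Prop := ∃ C D : Set α, (M.contract' C).delete' D = N

/-- An isomorphism between matroids, possibly on different ground types. -/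
def IsIso (M : Matroid α) (N : Matroid β) : Prop :=
  ∃ e : M.E ≃ N.E, ∀ I : Set M.E, M.Indep ((↑) '' I) ↔ N.Indep ((↑) '' (e '' I))

/-- `N` is isomorphic to the uniform matroid `U_{k,n}`: the ground set has `n` elements and
the independent sets are exactly the subsets with at most `k` elements. -/
def IsUnif (N : Matroid α) (k n : ℕ) : Prop :=
  N.E.Finite ∧ N.E.ncard = n ∧ ∀ I ⊆ N.E, (N.Indep I ↔ I.ncard ≤ k)

/-- `M` has a minor isomorphic to `U_{k,n}`. -/
def HasUnifMinor (M : Matroid α) (k n : ℕ) : Prop :=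
  ∃ N : Matroid α, N.IsMinor' M ∧ N.IsUnif k n

/-- `τ_a(M)`: the minimum size of a collection of subsets of `E(M)`, each of rank at most `a`,
whose union is `E(M)`. -/
noncomputable def tau (M : Matroid α) (a : ℕ) : ℕ :=
  sInf {n | ∃ 𝒞 : Finset (Set α),
    𝒞.card = n ∧ (∀ X ∈ 𝒞, X ⊆ M.E ∧ M.rk X ≤ a) ∧ M.E ⊆ ⋃₀ ↑𝒞}

/-- `M` is `d`-thick: every collection of sets, each of rank less than `r(M)`, whose union
is `E(M)`, has at least `d` members. -/
def Thick (M : Matroid α) (d : ℕ) : Prop :=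
  ∀ 𝒞 : Finset (Set α), (∀ X ∈ 𝒞, X ⊆ M.E ∧ M.rk X < M.rank) → M.E ⊆ ⋃₀ ↑𝒞 → d ≤ 𝒞.card

/-- A set `X` is `d`-thick in `M` if the restriction `M|X` is `d`-thick. -/
def ThickIn (M : Matroid α) (d : ℕ) (X : Set α) : Prop := (M ↾ X).Thick d

/-- A collection of sets is simple in `M` if its members are pairwise dissimilar,
i.e. distinct members have distinct closures. -/
def SimpleColl (M : Matroid α) (𝒳 : Finset (Set α)) : Prop :=
  ∀ X ∈ 𝒳, ∀ Y ∈ 𝒳, M.closure X = M.closure Y → X = Y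

/-- `ε_M(𝒳)`: the maximum size of a subcollection of `𝒳` that is simple in `M`. -/
noncomputable def eps (M : Matroid α) (𝒳 : Finset (Set α)) : ℕ :=
  sSup {n | ∃ 𝒴 : Finset (Set α), 𝒴 ⊆ 𝒳 ∧ M.SimpleColl 𝒴 ∧ 𝒴.card = n}

/-- `𝒳` is `d`-firm in `M`: every subcollection `𝒳'` with `|𝒳'| > |𝒳|/d` has the same rank
as `𝒳`. -/
def Firm (M : Matroid α) (d : ℕ) (𝒳 : Finset (Set α)) : Prop :=
  ∀ 𝒳' ⊆ 𝒳, 𝒳.card < d * 𝒳'.card → M.rk (⋃₀ ↑𝒳') = M.rk (⋃₀ ↑𝒳)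

/-- `ℱ` is a cover of the collection `𝒳` in `M`: every member of `𝒳` is contained in a member
of `ℱ`. -/
def CoverOf (M : Matroid α) (ℱ 𝒳 : Finset (Set α)) : Prop :=
  (∀ F ∈ ℱ, F ⊆ M.E) ∧ ∀ X ∈ 𝒳, ∃ F ∈ ℱ, X ⊆ F

/-- `ℱ` is a cover of the matroid `M`: every element of `E(M)` lies in a member of `ℱ`. -/
def CoverOfGround (M : Matroid α) (ℱ : Finset (Set α)) : Prop :=
  (∀ F ∈ ℱ, F ⊆ M.E) ∧ M.E ⊆ ⋃₀ ↑ℱ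

/-- The weight `wt^d_M(ℱ) = Σ_{F ∈ ℱ} d^{r_M(F)}`. -/
noncomputable def wt (M : Matroid α) (d : ℕ) (ℱ : Finset (Set α)) : ℕ :=
  ∑ F ∈ ℱ, d ^ M.rk F

/-- `ℱ` is a `d`-minimal cover of the collection `𝒳` in `M`. -/
def MinimalCoverOf (M : Matroid α) (d : ℕ) (ℱ 𝒳 : Finset (Set α)) : Prop :=
  M.CoverOf ℱ 𝒳 ∧ ∀ ℱ' : Finset (Set α), M.CoverOf ℱ' 𝒳 → M.wt d ℱ ≤ M.wt d ℱ'

/-- `ℱ` is a `d`-minimal cover of the matroid `M`. -/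
def MinimalCoverOfGround (M : Matroid α) (d : ℕ) (ℱ : Finset (Set α)) : Prop :=
  M.CoverOfGround ℱ ∧ ∀ ℱ' : Finset (Set α), M.CoverOfGround ℱ' → M.wt d ℱ ≤ M.wt d ℱ'

/-- `τ^d(M)`: the minimum weight of a cover of `M`. -/
noncomputable def tauW (M : Matroid α) (d : ℕ) : ℕ :=
  sInf {n | ∃ ℱ : Finset (Set α), M.CoverOfGround ℱ ∧ M.wt d ℱ = n}

/-- `𝒳` is `d`-scattered in `M`: every member of `𝒳` is `d`-thick in `M`, and
`{cl_M(X) : X ∈ 𝒳}` is a `d`-minimal cover of `𝒳` in `M`. -/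
def Scattered (M : Matroid α) (d : ℕ) (𝒳 : Finset (Set α)) : Prop :=
  (∀ X ∈ 𝒳, M.ThickIn d X) ∧ M.MinimalCoverOf d (𝒳.image M.closure) 𝒳

/-- `(M, 𝒮; L)` is an `(a, q, h, d)`-pyramid, where `h = L.length` and `L` lists the
elements `e_1, …, e_h`. -/
def IsPyramid (M : Matroid α) (𝒮 : Finset (Set α)) (L : List α) (a q d : ℕ) : Prop :=
  L.Nodup ∧ M.Indep {x | x ∈ L} ∧
  𝒮.Nonempty ∧
  (∀ S ∈ 𝒮, S ⊆ M.E ∧ M.rk S = a) ∧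
  (∀ S ∈ 𝒮, M.rk (S ∪ {x | x ∈ L}) = M.rk S + M.rk {x | x ∈ L}) ∧
  (∀ i < L.length, ∀ S ∈ 𝒮, ∃ f : Fin q → Set α,
    (∀ j, f j ∈ 𝒮) ∧
    (∀ j k, j ≠ k →
      (M.contract' {x | x ∈ L.take i}).closure (f j) ≠
        (M.contract' {x | x ∈ L.take i}).closure (f k)) ∧
    (∀ j, (M.contract' {x | x ∈ L.take (i+1)}).closure (f j) =
      (M.contract' {x | x ∈ L.take (i+1)}).closure S)) ∧
  (∀ S ∈ 𝒮, M.ThickIn d S)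

/-- `M` is representable over the field `F`. -/
def RepresentableOver (M : Matroid α) (F : Type*) [Field F] : Prop :=
  ∃ (n : ℕ) (φ : α → (Fin n → F)),
    ∀ I ⊆ M.E, (M.Indep I ↔ LinearIndependent F (fun x : I => φ x))

end Matroid

/-! The restriction is to the flat `F = cl_M(S ∪ {e_1, …, e_h})`, which has rank `a + h` because
`S` is skew to the `e_i`. Members of the subfamily lie in `F`, and for sets inside `F` similarity
in `(M|F) / C` is the same as in `M / C`, since `cl_{M|F} = cl_M ∩ F`. Similarity in `M_{i+1}`
implies similarity in `M_h`, so the `q` witnesses of a member of the subfamily stay in it. -/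
theorem List.Nodup.ncard_setOf_mem {α : Type*} {L : List α} (hL : L.Nodup) :
    {x | x ∈ L}.ncard = L.length := by
  rw [← List.coe_toFinset, Set.ncard_coe_finset, List.toFinset_card_of_nodup hL]

namespace Matroid

section Rank

variable {α : Type*} {M : Matroid α} {R X I : Set α}

lemma rk_eq_toNat_eRk (M : Matroid α) [M.RankFinite] (X : Set α) :
    M.rk X = (M.eRk X).toNat := by
  obtain ⟨I, hI⟩ := M.exists_isBasis' X
  have hle : ∀ n ∈ {n | ∃ J, J ⊆ X ∧ M.Indep J ∧ J.ncard = n}, n ≤ I.ncard := by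
    rintro _ ⟨J, hJX, hJ, rfl⟩
    rw [ncard_def, ncard_def, hI.encard_eq_eRk]
    exact ENat.toNat_le_toNat (hJ.encard_le_eRk_of_subset hJX) (M.isRkFinite_set X).eRk_lt_top.ne
  rw [← hI.encard_eq_eRk, ← ncard_def]
  exact le_antisymm (csSup_le ⟨_, I, hI.subset, hI.indep, rfl⟩ hle)
    (le_csSup ⟨_, hle⟩ ⟨I, hI.subset, hI.indep, rfl⟩)

lemma rk_closure_eq (M : Matroid α) [M.RankFinite] (X : Set α) :
    M.rk (M.closure X) = M.rk X := by
  rw [rk_eq_toNat_eRk, rk_eq_toNat_eRk, eRk_closure_eq]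

lemma Indep.rk_eq_ncard [M.RankFinite] (hI : M.Indep I) : M.rk I = I.ncard := by
  rw [rk_eq_toNat_eRk, hI.eRk_eq_encard, ncard_def]

lemma rk_restrict_of_subset (M : Matroid α) (hXR : X ⊆ R) : (M ↾ R).rk X = M.rk X := by
  simp only [rk, restrict_indep_iff]
  congr 1
  ext n
  exact exists_congr fun I ↦ ⟨fun ⟨hIX, ⟨hI, _⟩, h⟩ ↦ ⟨hIX, hI, h⟩,
    fun ⟨hIX, hI, h⟩ ↦ ⟨hIX, ⟨hI, hIX.trans hXR⟩, h⟩⟩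

end Rank

section Similarity

variable {α : Type*} {M : Matroid α} {C D R X Y : Set α}

lemma closure_contract_eq_closure_contract_iff (M : Matroid α) (hC : C ⊆ M.E) :
    (M ／ C).closure X = (M ／ C).closure Y ↔ M.closure (X ∪ C) = M.closure (Y ∪ C) := by
  rw [contract_closure_eq, contract_closure_eq]
  refine ⟨fun h ↦ ?_, fun h ↦ by rw [h]⟩
  rw [← sdiff_union_of_subset (M.subset_closure_of_subset' subset_union_right hC), h,
    sdiff_union_of_subset (M.subset_closure_of_subset' subset_union_right hC)]

lemma closure_restrict_eq_closure_restrict_iff (hXR : X ⊆ R) (hYR : Y ⊆ R) (hR : R ⊆ M.E) :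
    (M ↾ R).closure X = (M ↾ R).closure Y ↔ M.closure X = M.closure Y := by
  have hcl : ∀ Z ⊆ R, M.closure (M.closure Z ∩ R) = M.closure Z := fun Z hZ ↦
    subset_antisymm (M.closure_subset_closure_of_subset_closure inter_subset_left)
      (M.closure_subset_closure (subset_inter (M.subset_closure Z (hZ.trans hR)) hZ))
  rw [restrict_closure_eq _ hXR hR, restrict_closure_eq _ hYR hR]
  exact ⟨fun h ↦ by rw [← hcl X hXR, h, hcl Y hYR], fun h ↦ by rw [h]⟩

lemma subset_closure_union_of_closure_contract_eq (hX : X ⊆ M.E) (hC : C ⊆ M.E)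
    (h : (M ／ C).closure X = (M ／ C).closure Y) : X ⊆ M.closure (Y ∪ C) := by
  rw [closure_contract_eq_closure_contract_iff _ hC] at h
  exact h ▸ M.subset_closure_of_subset' subset_union_left hX

lemma closure_restrict_contract_eq_iff (hXR : X ⊆ R) (hYR : Y ⊆ R) (hCR : C ⊆ R)
    (hR : R ⊆ M.E) :
    ((M ↾ R) ／ C).closure X = ((M ↾ R) ／ C).closure Y ↔
      (M ／ C).closure X = (M ／ C).closure Y := by
  rw [closure_contract_eq_closure_contract_iff _ hCR, closure_restrict_eq_closure_restrict_iff
    (union_subset hXR hCR) (union_subset hYR hCR) hR,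
    closure_contract_eq_closure_contract_iff _ (hCR.trans hR)]

lemma closure_contract_eq_of_subset (hCD : C ⊆ D) (hD : D ⊆ M.E)
    (h : (M ／ C).closure X = (M ／ C).closure Y) : (M ／ D).closure X = (M ／ D).closure Y := by
  rw [closure_contract_eq_closure_contract_iff _ (hCD.trans hD)] at h
  rw [closure_contract_eq_closure_contract_iff _ hD, ← union_eq_self_of_subset_left hCD,
    ← union_assoc, ← union_assoc, ← closure_union_closure_left_eq, h,
    closure_union_closure_left_eq]

end Similarity

section Pyramid

variable {α : Type*} {M : Matroid α} {R S : Set α} {𝒮 : Finset (Set α)} {L : List α}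
  {a q d : ℕ}

lemma IsPyramid.restrict_filter (hP : M.IsPyramid 𝒮 L a q d) (hS : S ∈ 𝒮) (hR : R ⊆ M.E)
    (hSLR : M.closure (S ∪ {x | x ∈ L}) ⊆ R) :
    (M ↾ R).IsPyramid (𝒮.filter fun S' =>
      (M.contract' {x | x ∈ L}).closure S' = (M.contract' {x | x ∈ L}).closure S) L a q d := by
  set 𝒯 := 𝒮.filter fun S' =>
    (M.contract' {x | x ∈ L}).closure S' = (M.contract' {x | x ∈ L}).closure S
  obtain ⟨hnd, hLind, -, hrk, hskew, hstack, hthick⟩ := hP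
  have hLE : {x | x ∈ L} ⊆ M.E := hLind.subset_ground
  have hLR : {x | x ∈ L} ⊆ R := (M.subset_closure_of_subset' subset_union_right).trans hSLR
  have htake (n : ℕ) : {x | x ∈ L.take n} ⊆ {x | x ∈ L} := fun x hx ↦ List.take_subset n L hx
  have hmem {S'} (hS' : S' ∈ 𝒯) : S' ∈ 𝒮 ∧ S' ⊆ R := by
    obtain ⟨hS'𝒮, hsim⟩ := Finset.mem_filter.1 hS'
    exact ⟨hS'𝒮, (subset_closure_union_of_closure_contract_eq (hrk S' hS'𝒮).1 hLE hsim).trans hSLR⟩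
  refine ⟨hnd, restrict_indep_iff.2 ⟨hLind, hLR⟩, ⟨S, Finset.mem_filter.2 ⟨hS, rfl⟩⟩,
    fun S' hS' ↦ ?_, fun S' hS' ↦ ?_, fun i hi S' hS' ↦ ?_, fun S' hS' ↦ ?_⟩
  · obtain ⟨hS'𝒮, hS'R⟩ := hmem hS'
    exact ⟨hS'R, by rw [rk_restrict_of_subset _ hS'R]; exact (hrk S' hS'𝒮).2⟩
  · obtain ⟨hS'𝒮, hS'R⟩ := hmem hS'
    rw [rk_restrict_of_subset _ (union_subset hS'R hLR), rk_restrict_of_subset _ hS'R,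
      rk_restrict_of_subset _ hLR]
    exact hskew S' hS'𝒮
  · obtain ⟨hS'𝒮, hS'R⟩ := hmem hS'
    obtain ⟨f, hf𝒮, hfdis, hfsim⟩ := hstack i hi S' hS'𝒮
    have hff (j : Fin q) : f j ∈ 𝒯 := by
      refine Finset.mem_filter.2 ⟨hf𝒮 j, ?_⟩
      rw [← (Finset.mem_filter.1 hS').2]
      exact closure_contract_eq_of_subset (htake _) hLE (hfsim j)
    refine ⟨f, hff, fun j k hjk ↦ ?_, fun j ↦ ?_⟩
    · exact (closure_restrict_contract_eq_iff (hmem (hff j)).2 (hmem (hff k)).2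
        ((htake i).trans hLR) hR).not.2 (hfdis j k hjk)
    · exact (closure_restrict_contract_eq_iff (hmem (hff j)).2 hS'R
        ((htake _).trans hLR) hR).2 (hfsim j)
  · obtain ⟨hS'𝒮, hS'R⟩ := hmem hS'
    rw [ThickIn, restrict_restrict_eq _ hS'R]
    exact hthick S' hS'𝒮

lemma IsPyramid.rk_closure_union [M.RankFinite] (hP : M.IsPyramid 𝒮 L a q d) (hS : S ∈ 𝒮) :
    M.rk (M.closure (S ∪ {x | x ∈ L})) = a + L.length := by
  obtain ⟨hnd, hLind, -, hrk, hskew, -⟩ := hP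
  rw [rk_closure_eq, hskew S hS, (hrk S hS).2, hLind.rk_eq_ncard, hnd.ncard_setOf_mem]

end Pyramid

theorem statement18_general {α : Type*} (a q d : ℕ)
    (M : Matroid α) (hM : M.Finite) (𝒮 : Finset (Set α)) (L : List α)
    (hP : M.IsPyramid 𝒮 L a q d) (S : Set α) (hS : S ∈ 𝒮) :
    ∃ M' : Matroid α, M'.IsRestriction M ∧ M'.rank = a + L.length ∧
      M'.IsPyramid (𝒮.filter fun S' =>
        (M.contract' {x | x ∈ L}).closure S' = (M.contract' {x | x ∈ L}).closure S)
        L a q d := by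
  have hF : M.closure (S ∪ {x | x ∈ L}) ⊆ M.E := M.closure_subset_ground _
  refine ⟨M ↾ M.closure (S ∪ {x | x ∈ L}), M.restrict_isRestriction _ hF, ?_,
    hP.restrict_filter hS hF Subset.rfl⟩
  rw [rank, restrict_ground_eq, rk_restrict_of_subset _ Subset.rfl, hP.rk_closure_union hS]

/-- If `(M, 𝒮; e_1, …, e_h)` is an `(a,q,h,d)`-pyramid,
`M_h = M / {e_1, …, e_h}` and `S ∈ 𝒮`, then there is a restriction `M'` of `M` with
`r(M') = a + h` such that `(M', {S' ∈ 𝒮 : cl_{M_h}(S') = cl_{M_h}(S)}; e_1, …, e_h)` is an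
`(a,q,h,d)`-pyramid. -/
theorem statement18 {α : Type*} (a q d : ℕ) (ha : 1 ≤ a) (hq : 1 ≤ q) (hd : 1 ≤ d)
    (M : Matroid α) (hM : M.Finite) (𝒮 : Finset (Set α)) (L : List α)
    (hP : M.IsPyramid 𝒮 L a q d) (S : Set α) (hS : S ∈ 𝒮) :
    ∃ M' : Matroid α, M'.IsRestriction M ∧ M'.rank = a + L.length ∧
      M'.IsPyramid (𝒮.filter fun S' =>
        (M.contract' {x | x ∈ L}).closure S' = (M.contract' {x | x ∈ L}).closure S)
        L a q d :=
  statement18_general a q d M hM 𝒮 L hP S hS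

end Matroid
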